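/- For a deficit queue with dynamics d(t+1) = max[d(t) - κ(t), 0] + γ(t), where γ(t) maximizes V·U(γ) - d(t)·γ over γ ∈ [0, r_max] for an increasing concave differentiable U with maximum derivative β, if d(0) ≤ Vβ + r_max then d(t) ≤ Vβ + r_max for all t. (Key fact: whenever d(t) > Vβ, the maximizer is γ(t) = 0.) -/
import Mathlib

/-- Mean value bound: concave differentiable function with derivative ≤ β grows at most linearly. -/
lemma slope_bound (rmax β : ℝ) (U : ℝ → ℝ) (hrmax : 0 < rmax) (hβ : 0 ≤ β)
    (hUdiff : DifferentiableOn ℝ U (Set.Icc 0 rmax))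
    (hderiv : ∀ x ∈ Set.Icc (0 : ℝ) rmax, deriv U x ≤ β)
    {g : ℝ} (hg : g ∈ Set.Icc (0 : ℝ) rmax) : U g - U 0 ≤ β * g := by
  rcases eq_or_lt_of_le hg.1 with h0 | h0
  · simp [← h0]
  · obtain ⟨c, hc, hceq⟩ := exists_deriv_eq_slope U h0
      (hUdiff.continuousOn.mono (Set.Icc_subset_Icc le_rfl hg.2))
      (hUdiff.mono (fun x hx => ⟨hx.1.le, le_trans hx.2.le hg.2⟩))
    have hcmem : c ∈ Set.Icc (0 : ℝ) rmax := ⟨hc.1.le, hc.2.le.trans hg.2⟩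
    have := hderiv c hcmem
    have hslope : (U g - U 0) / (g - 0) ≤ β := hceq ▸ this
    have : U g - U 0 ≤ β * (g - 0) := by
      rw [div_le_iff₀ (by linarith)] at hslope; linarith
    linarith

/-- Deficit queue boundedness under the quota-maximizing choice of `γ`. -/
theorem deficit_queue_bounded
    (d κ γ : ℕ → ℝ) (V β rmax : ℝ) (U : ℝ → ℝ)
    (hV : 1 ≤ V) (hrmax : 0 < rmax) (hβ : 0 ≤ β)
    (hd0 : d 0 ≤ V * β + rmax)
    (hdnn : ∀ t, 0 ≤ d t)
    (hκ : ∀ t, 0 ≤ κ t)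
    (hUconc : ConcaveOn ℝ (Set.Icc 0 rmax) U)
    (hUmono : MonotoneOn U (Set.Icc 0 rmax))
    (hUdiff : DifferentiableOn ℝ U (Set.Icc 0 rmax))
    (hderiv : ∀ x ∈ Set.Icc (0 : ℝ) rmax, deriv U x ≤ β)
    (hγmem : ∀ t, γ t ∈ Set.Icc (0 : ℝ) rmax)
    (hγopt : ∀ t, ∀ x ∈ Set.Icc (0 : ℝ) rmax,
      V * U x - d t * x ≤ V * U (γ t) - d t * γ t)
    (hdyn : ∀ t, d (t + 1) = max (d t - κ t) 0 + γ t) :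
    ∀ t, d t ≤ V * β + rmax := by
  intro t
  induction t with
  | zero => exact hd0
  | succ n ih =>
    have hmax : max (d n - κ n) 0 ≤ d n := by
      apply max_le
      · linarith [hκ n]
      · exact hdnn n
    rw [hdyn n]
    by_cases h : d n ≤ V * β
    · have := (hγmem n).2
      linarith
    · -- d n > V * β implies γ n = 0
      push_neg at h
      have hopt := hγopt n 0 ⟨le_rfl, hrmax.le⟩
      have hslope := slope_bound rmax β U hrmax hβ hUdiff hderiv (hγmem n)
      have hγnn := (hγmem n).1
      have hVβ : d n * γ n ≤ V * (β * γ n) := by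
        have h1 : d n * γ n ≤ V * (U (γ n) - U 0) := by nlinarith
        have h2 : V * (U (γ n) - U 0) ≤ V * (β * γ n) := by
          apply mul_le_mul_of_nonneg_left hslope (by linarith)
        linarith
      have hγ0 : γ n = 0 := by nlinarith
      rw [hγ0]
      linarith
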